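/- arXiv:2504.05015 — 3 statements merged into one kernel-verified Lean document; each statement's English description precedes it below -/
import Mathlib

section
/- Let G = (N, T, P, S) be a context-free grammar all of whose nonterminals are useful, and let x ∈ ℕ^P with x_p ≥ 1 for every production p solve the homogeneous Esparza–Euler–Kirchhoff equation Φ_N·x = 0. Then there is a production sequence σ ∈ P* with Ψ_P(σ) = x and a derivation S ⇒^σ α such that the resulting sentential form contains exactly one nonterminal occurrence, namely S: that is, α = w₁.S.w₂ for some terminal words w₁, w₂ ∈ T*. -/
/-!
Read the grammar as a communication-free Petri net: nonterminals are places, and a production `p`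
takes a token from `lhs p` and puts the nonterminals of `rhs p` back, so a sentential form is seen
only through the multiset of its nonterminals. With `y` the multiset holding `x p` copies of each
production, the homogeneous equation `Φ_N·x = 0` says that `y` consumes exactly the tokens it
produces, so firing all of it from `{S}` can only end in `{S}`; usefulness says that every
production's left side can be reached from `S` along edges `A → B` (some production of `y`
rewrites `A` into a word containing `B`).

As for Euler circuits, an enabled production can always be fired without cutting the rest of `y`
off from the tokens (Fleury's rule). If firing `q₀` would cut off `u = lhs q₀`, then `u`
carries a single token but is consumed twice, so by balance some production `p` produces `u`; a
path from a token to `lhs p` then either reaches `u` from elsewhere, which survives firing `q₀`,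
or is a cycle through `u`, whose first production can be fired instead. Induction on `y` gives a
firing sequence, and it lifts to a derivation ending in a form whose only nonterminal is `S`.
-/

namespace EEK

variable {N T P : Type}

/-- `DerivesBy lhs rhs σ α β` formalizes `α ⇒^σ β`: the sequence `σ` of productions is
applied, each rewriting one occurrence of a nonterminal. -/
inductive DerivesBy (lhs : P → N) (rhs : P → List (N ⊕ T)) :
    List P → List (N ⊕ T) → List (N ⊕ T) → Prop
  | refl (α : List (N ⊕ T)) : DerivesBy lhs rhs [] α α
  | step {p : P} {α β γ : List (N ⊕ T)} {σ : List P} (l r : List (N ⊕ T)) :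
      α = l ++ Sum.inl (lhs p) :: r → β = l ++ rhs p ++ r →
      DerivesBy lhs rhs σ β γ → DerivesBy lhs rhs (p :: σ) α γ

/-- The derivation relation `⇒*`. -/
def Derives (lhs : P → N) (rhs : P → List (N ⊕ T))
    (α β : List (N ⊕ T)) : Prop :=
  ∃ σ : List P, DerivesBy lhs rhs σ α β

/-- `A` is useful with respect to the start symbol `S`. -/
def Useful (lhs : P → N) (rhs : P → List (N ⊕ T)) (S A : N) : Prop :=
  ∃ (α₁ α₂ : List (N ⊕ T)) (w : List T),
    Derives lhs rhs [Sum.inl S] (α₁ ++ Sum.inl A :: α₂) ∧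
    Derives lhs rhs (α₁ ++ Sum.inl A :: α₂) (w.map Sum.inr)

/-- `eff_N(p)(A)`, the column `p` of the matrix `Φ_N` evaluated at `A`. -/
def effN [DecidableEq N] [DecidableEq T] (lhs : P → N) (rhs : P → List (N ⊕ T))
    (p : P) (A : N) : ℤ :=
  ((rhs p).count (Sum.inl A) : ℤ) - if lhs p = A then 1 else 0

/-- `(Φ_N · x) A`. -/
def phiNmul [Fintype P] [DecidableEq N] [DecidableEq T] (lhs : P → N)
    (rhs : P → List (N ⊕ T)) (x : P → ℕ) (A : N) : ℤ :=
  ∑ p : P, effN lhs rhs p A * (x p : ℤ)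

end EEK

theorem Relation.ReflTransGen.avoiding_sources {α : Type*} {r : α → α → Prop} {a b : α}
    (h : ReflTransGen r a b) : ReflTransGen (fun c d => r c d ∧ c ≠ b) a b := by
  induction h using ReflTransGen.head_induction_on with
  | refl => exact .refl
  | @head a c hac _ ih =>
    by_cases hab : a = b
    · exact hab ▸ .refl
    · exact ih.head ⟨hac, hab⟩

-- `List.count` on `N ⊕ T` goes through the derived `BEq` instance of `Sum`, not `DecidableEq`.
instance Sum.instLawfulBEq {α β : Type*} [BEq α] [LawfulBEq α] [BEq β] [LawfulBEq β] :
    LawfulBEq (α ⊕ β) where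
  eq_of_beq {a b} h := by
    cases a <;> cases b <;> first | exact Bool.noConfusion h | exact congrArg _ (eq_of_beq h)
  rfl {a} := by
    cases a with
    | inl a => exact beq_self_eq_true a
    | inr b => exact beq_self_eq_true b

theorem Multiset.count_bind_eq_sum_count {α β : Type*} [Fintype α] [DecidableEq α]
    [DecidableEq β] (s : Multiset α) (f : α → Multiset β) (b : β) :
    (s.bind f).count b = ∑ a, s.count a * (f a).count b := by
  induction s using Multiset.induction_on with
  | empty => simp
  | cons a s ih => simp [count_cons, add_mul, Finset.sum_add_distrib, ih, add_comm]

namespace EEK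

open Multiset Relation

section CommunicationFree

variable {N P : Type*} (pre : P → N) (post : P → Multiset N)

def fire [DecidableEq N] (m : Multiset N) (p : P) : Multiset N := m.erase (pre p) + post p

def Edge (y : Multiset P) (a b : N) : Prop := ∃ p ∈ y, pre p = a ∧ b ∈ post p

def Reach (m : Multiset N) (y : Multiset P) (v : N) : Prop :=
  ∃ u ∈ m, ReflTransGen (Edge pre post y) u v

def Connected (m : Multiset N) (y : Multiset P) : Prop :=
  ∀ p ∈ y, Reach pre post m y (pre p)

def Balanced (m : Multiset N) (y : Multiset P) (t : Multiset N) : Prop :=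
  m + y.bind post = t + y.map pre

inductive Run [DecidableEq N] : Multiset N → List P → Multiset N → Prop
  | nil (m : Multiset N) : Run m [] m
  | cons {m t : Multiset N} {σ : List P} (p : P) :
      pre p ∈ m → Run (fire pre post m p) σ t → Run m (p :: σ) t

variable {pre post}

lemma Balanced.fire_erase [DecidableEq N] [DecidableEq P] {m t : Multiset N} {y : Multiset P}
    {q : P} (hb : Balanced pre post m y t) (hq : q ∈ y) (hm : pre q ∈ m) :
    Balanced pre post (fire pre post m q) (y.erase q) t := by
  rw [Balanced, ← cons_erase hq, ← cons_erase hm, cons_bind, map_cons] at hb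
  rw [Balanced, EEK.fire, ← add_right_inj ({pre q} : Multiset N)]
  simpa only [singleton_add, cons_add, add_cons, add_assoc, add_left_comm] using hb

lemma Balanced.eq_of_zero {m t : Multiset N} (hb : Balanced pre post m 0 t) : m = t := by
  simpa [Balanced] using hb

lemma mem_fire_of_mem_post [DecidableEq N] {m : Multiset N} {p : P} {v : N} (hv : v ∈ post p) :
    v ∈ fire pre post m p :=
  mem_add.2 (Or.inr hv)

lemma mem_fire_of_ne [DecidableEq N] {m : Multiset N} {p : P} {v : N} (hv : v ∈ m)
    (hne : v ≠ pre p) : v ∈ fire pre post m p :=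
  mem_add.2 (Or.inl ((mem_erase_of_ne hne).2 hv))

lemma Edge.erase [DecidableEq P] {y : Multiset P} {q : P} {a b : N}
    (h : Edge pre post y a b) (ha : a ≠ pre q) : Edge pre post (y.erase q) a b := by
  obtain ⟨p, hp, rfl, hb⟩ := h
  exact ⟨p, (mem_erase_of_ne (by rintro rfl; exact ha rfl)).2 hp, rfl, hb⟩

lemma Reach.tail {m : Multiset N} {y : Multiset P} {a b : N} (h : Reach pre post m y a)
    (hab : Edge pre post y a b) : Reach pre post m y b :=
  let ⟨u, hu, hua⟩ := h
  ⟨u, hu, hua.tail hab⟩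

lemma reach_fire_of_reflTransGen [DecidableEq N] [DecidableEq P] {m : Multiset N}
    {y : Multiset P} {q : P} {v : N}
    (hv : v ∈ fire pre post m q) (h : ReflTransGen (Edge pre post y) v (pre q)) :
    Reach pre post (fire pre post m q) (y.erase q) (pre q) :=
  ⟨v, hv, ReflTransGen.mono (fun _ _ hab => hab.1.erase hab.2) _ _ h.avoiding_sources⟩

lemma Connected.fire_erase [DecidableEq N] [DecidableEq P] {m : Multiset N} {y : Multiset P}
    {q : P} (hc : Connected pre post m y) (hq : q ∈ y)
    (hpre : (∃ r ∈ y.erase q, pre r = pre q) →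
      Reach pre post (fire pre post m q) (y.erase q) (pre q)) :
    Connected pre post (fire pre post m q) (y.erase q) := by
  intro r hr
  obtain ⟨w, hw, hpath⟩ := hc r (mem_of_mem_erase hr)
  suffices key : ∀ v, ReflTransGen (Edge pre post y) w v →
      Reach pre post (fire pre post m q) (y.erase q) v ∨ v = pre q by
    rcases key _ hpath with h | h
    · exact h
    · exact h ▸ hpre ⟨r, hr, h⟩
  intro v hv
  induction hv with
  | refl =>
    by_cases hwq : w = pre q
    · exact .inr hwq
    · exact .inl ⟨w, mem_fire_of_ne hw hwq, .refl⟩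
  | @tail b c _ hbc ih =>
    obtain ⟨s, hs, rfl, hc⟩ := hbc
    by_cases hsq : s ∈ y.erase q
    · have hb : Reach pre post (fire pre post m q) (y.erase q) (pre s) :=
        ih.elim id fun h => h ▸ hpre ⟨s, hsq, h⟩
      exact .inl (hb.tail ⟨s, hsq, rfl, hc⟩)
    · obtain rfl : s = q := by_contra fun h => hsq ((mem_erase_of_ne h).2 hs)
      exact .inl ⟨c, mem_fire_of_mem_post hc, .refl⟩

lemma Connected.exists_pre_mem {m : Multiset N} {y : Multiset P}
    (hc : Connected pre post m y) (hy : y ≠ 0) : ∃ q ∈ y, pre q ∈ m := by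
  obtain ⟨p, hp⟩ := exists_mem_of_ne_zero hy
  obtain ⟨w, hw, hpath⟩ := hc p hp
  rcases hpath.cases_head with rfl | ⟨v, ⟨s, hs, rfl, -⟩, -⟩
  · exact ⟨p, hp, hw⟩
  · exact ⟨s, hs, hw⟩

lemma Balanced.exists_mem_post [DecidableEq N] [DecidableEq P] {m t : Multiset N}
    {y : Multiset P} {q r : P} (hb : Balanced pre post m y t) (hq : q ∈ y) (hr : r ∈ y.erase q)
    (hrq : pre r = pre q) (hm : pre q ∈ m) (hm' : pre q ∉ m.erase (pre q)) :
    ∃ p ∈ y, pre q ∈ post p := by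
  have hpre : y.map pre = pre q ::ₘ pre q ::ₘ ((y.erase q).erase r).map pre := by
    conv_lhs => rw [← cons_erase hq, ← cons_erase hr]
    rw [map_cons, map_cons, hrq]
  rw [Balanced, hpre, ← cons_erase hm, cons_add, add_cons, cons_inj_right] at hb
  have : pre q ∈ m.erase (pre q) + y.bind post := hb ▸ mem_add.2 (.inr (mem_cons_self _ _))
  simpa only [mem_add, hm', false_or, mem_bind] using this

lemma Balanced.exists_connected_fire [DecidableEq N] [DecidableEq P] {m t : Multiset N}
    {y : Multiset P} (hb : Balanced pre post m y t) (hc : Connected pre post m y) (hy : y ≠ 0) :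
    ∃ q ∈ y, pre q ∈ m ∧ Connected pre post (fire pre post m q) (y.erase q) := by
  obtain ⟨q₀, hq₀, hm₀⟩ := hc.exists_pre_mem hy
  by_cases hsib : ∃ r ∈ y.erase q₀, pre r = pre q₀
  swap
  · exact ⟨q₀, hq₀, hm₀, hc.fire_erase hq₀ fun h => absurd h hsib⟩
  suffices ∃ q ∈ y, pre q = pre q₀ ∧
      Reach pre post (fire pre post m q) (y.erase q) (pre q) by
    obtain ⟨q, hq, hqq₀, hreach⟩ := this
    exact ⟨q, hq, hqq₀ ▸ hm₀, hc.fire_erase hq fun _ => hreach⟩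
  by_cases hm₀' : pre q₀ ∈ m.erase (pre q₀)
  · exact ⟨q₀, hq₀, rfl, pre q₀, mem_add.2 (.inl hm₀'), .refl⟩
  obtain ⟨r, hr, hrq₀⟩ := hsib
  obtain ⟨p, hp, hpost⟩ := hb.exists_mem_post hq₀ hr hrq₀ hm₀ hm₀'
  obtain ⟨w, hw, hpath⟩ := hc p hp
  have hedge : Edge pre post y (pre p) (pre q₀) := ⟨p, hp, rfl, hpost⟩
  by_cases hwq₀ : w = pre q₀
  · -- the path closes a cycle through `pre q₀`; fire its first transition instead of `q₀`
    subst hwq₀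
    obtain ⟨v, ⟨q, hq, hqq₀, hv⟩, hvq₀⟩ :=
      TransGen.head'_iff.1 (TransGen.tail' hpath hedge)
    exact ⟨q, hq, hqq₀,
      reach_fire_of_reflTransGen (mem_fire_of_mem_post hv) (hqq₀ ▸ hvq₀)⟩
  · exact ⟨q₀, hq₀, rfl,
      reach_fire_of_reflTransGen (mem_fire_of_ne hw hwq₀) (hpath.tail hedge)⟩

theorem Balanced.exists_run [DecidableEq N] [DecidableEq P] {m t : Multiset N} {y : Multiset P}
    (hb : Balanced pre post m y t) (hc : Connected pre post m y) :
    ∃ σ : List P, (σ : Multiset P) = y ∧ Run pre post m σ t := by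
  by_cases hy : y = 0
  · subst hy
    exact ⟨[], rfl, hb.eq_of_zero ▸ .nil m⟩
  obtain ⟨q, hq, hm, hc'⟩ := hb.exists_connected_fire hc hy
  obtain ⟨σ, hσ, hrun⟩ := (hb.fire_erase hq hm).exists_run hc'
  exact ⟨q :: σ, by rw [← cons_coe, hσ, cons_erase hq], .cons q hm hrun⟩
termination_by card y
decreasing_by exact card_erase_lt_of_mem hq

end CommunicationFree

section Grammar

variable {N T P : Type}

def nonterminals (α : List (N ⊕ T)) : Multiset N := α.filterMap Sum.getLeft?

@[simp]
lemma mem_nonterminals {α : List (N ⊕ T)} {A : N} :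
    A ∈ nonterminals α ↔ Sum.inl A ∈ α := by
  simp [nonterminals, Sum.getLeft?_eq_some_iff]

@[simp]
lemma nonterminals_append (α β : List (N ⊕ T)) :
    nonterminals (α ++ β) = nonterminals α + nonterminals β := by
  simp [nonterminals]

@[simp]
lemma nonterminals_cons_inl (A : N) (α : List (N ⊕ T)) :
    nonterminals (Sum.inl A :: α) = A ::ₘ nonterminals α := by
  simp [nonterminals]

lemma count_nonterminals [DecidableEq N] [DecidableEq T] (α : List (N ⊕ T)) (A : N) :
    count A (nonterminals α) = α.count (Sum.inl A) := by
  induction α with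
  | nil => rfl
  | cons a α ih =>
    rw [List.count_cons, ← ih]
    rcases a with B | b
    · simp [count_cons, eq_comm (a := B)]
    · rfl

lemma exists_eq_map_inr_of_nonterminals_eq_zero {α : List (N ⊕ T)} (h : nonterminals α = 0) :
    ∃ w : List T, α = w.map Sum.inr := by
  induction α with
  | nil => exact ⟨[], rfl⟩
  | cons a α ih =>
    rcases a with A | b
    · simp at h
    · obtain ⟨w, rfl⟩ := ih (by simpa [nonterminals] using h)
      exact ⟨b :: w, rfl⟩

lemma exists_eq_of_nonterminals_eq_singleton {α : List (N ⊕ T)} {S : N}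
    (h : nonterminals α = {S}) :
    ∃ w₁ w₂ : List T, α = w₁.map Sum.inr ++ Sum.inl S :: w₂.map Sum.inr := by
  obtain ⟨l, r, rfl⟩ := List.append_of_mem (mem_nonterminals.1 (h ▸ mem_singleton_self S))
  rw [nonterminals_append, nonterminals_cons_inl, add_cons, ← cons_zero, cons_inj_right,
    add_eq_zero] at h
  obtain ⟨w₁, rfl⟩ := exists_eq_map_inr_of_nonterminals_eq_zero h.1
  obtain ⟨w₂, rfl⟩ := exists_eq_map_inr_of_nonterminals_eq_zero h.2
  exact ⟨w₁, w₂, rfl⟩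

theorem Run.exists_derivesBy [DecidableEq N] {lhs : P → N} {rhs : P → List (N ⊕ T)}
    {m t : Multiset N} {σ : List P} (h : Run lhs (fun p => nonterminals (rhs p)) m σ t)
    {β : List (N ⊕ T)} (hβ : nonterminals β = m) :
    ∃ γ, DerivesBy lhs rhs σ β γ ∧ nonterminals γ = t := by
  induction h generalizing β with
  | nil m => exact ⟨β, .refl β, hβ⟩
  | cons p hp _ ih =>
    subst hβ
    obtain ⟨l, r, rfl⟩ := List.append_of_mem (mem_nonterminals.1 hp)
    obtain ⟨γ, hd, hγ⟩ := ih (β := l ++ rhs p ++ r) (by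
      simp only [List.append_assoc, nonterminals_append, fire, nonterminals_cons_inl, add_cons,
        erase_cons_head]
      abel)
    exact ⟨γ, .step l r rfl rfl hd, hγ⟩

lemma DerivesBy.exists_reflTransGen {lhs : P → N} {rhs : P → List (N ⊕ T)} {y : Multiset P}
    {σ : List P} {β δ : List (N ⊕ T)} (h : DerivesBy lhs rhs σ β δ)
    (hσ : ∀ p ∈ σ, p ∈ y) {A : N} (hA : Sum.inl A ∈ δ) :
    ∃ B, Sum.inl B ∈ β ∧ ReflTransGen (Edge lhs (fun p => nonterminals (rhs p)) y) B A := by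
  induction h with
  | refl α => exact ⟨A, hA, .refl⟩
  | @step p α β γ σ l r hα hβ _ ih =>
    obtain ⟨B, hB, hBA⟩ := ih (fun q hq => hσ q (List.mem_cons_of_mem p hq)) hA
    subst hα hβ
    simp only [List.mem_append, List.mem_cons] at hB ⊢
    rcases hB with (hB | hB) | hB
    · exact ⟨B, .inl hB, hBA⟩
    · exact ⟨lhs p, .inr (.inl rfl),
        hBA.head ⟨p, hσ p List.mem_cons_self, rfl, mem_nonterminals.2 hB⟩⟩
    · exact ⟨B, .inr (.inr hB), hBA⟩

end Grammar

lemma balanced_of_phiNmul_eq_zero {N T P : Type} [Fintype P] [DecidableEq N] [DecidableEq T]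
    [DecidableEq P] {lhs : P → N} {rhs : P → List (N ⊕ T)} {x : P → ℕ} {y : Multiset P}
    (hy : ∀ p, count p y = x p) (h : ∀ A, phiNmul lhs rhs x A = 0) (m : Multiset N) :
    Balanced lhs (fun p => nonterminals (rhs p)) m y m := by
  rw [Balanced, add_right_inj, ← bind_singleton y lhs]
  ext A
  have hA := h A
  rw [phiNmul] at hA
  rw [count_bind_eq_sum_count, count_bind_eq_sum_count]
  simp_rw [hy, count_nonterminals, count_singleton]
  zify
  rw [← sub_eq_zero, ← Finset.sum_sub_distrib]
  refine (Finset.sum_congr rfl fun p _ => ?_).trans hA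
  simp only [effN, eq_comm (a := A)]
  split_ifs <;> ring

end EEK

open EEK in
theorem homogeneous_eek_realizable_general
    {N T P : Type} [Fintype P]
    [DecidableEq N] [DecidableEq T] [DecidableEq P]
    (lhs : P → N) (rhs : P → List (N ⊕ T)) (S : N)
    (hU : ∀ A : N, Useful lhs rhs S A)
    (x : P → ℕ) (hx1 : ∀ p : P, 1 ≤ x p)
    (hhom : ∀ A : N, phiNmul lhs rhs x A = 0) :
    ∃ σ : List P, (∀ p : P, σ.count p = x p) ∧
      ∃ w₁ w₂ : List T,
        DerivesBy lhs rhs σ [Sum.inl S]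
          (w₁.map Sum.inr ++ Sum.inl S :: w₂.map Sum.inr) := by
  set y : Multiset P := ∑ p, x p • {p}
  have hy : ∀ p, Multiset.count p y = x p := fun p => by
    simp [y, Multiset.count_sum', Multiset.count_singleton]
  have hconn : Connected lhs (fun p => nonterminals (rhs p)) {S} y := by
    intro p _
    obtain ⟨α₁, α₂, -, ⟨τ, hτ⟩, -⟩ := hU (lhs p)
    obtain ⟨B, hB, hBp⟩ := hτ.exists_reflTransGen (y := y) (A := lhs p)
      (fun q _ => Multiset.count_pos.1 (hy q ▸ hx1 q)) (by simp)
    exact ⟨B, by simpa using hB, hBp⟩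
  obtain ⟨σ, hσ, hrun⟩ := (balanced_of_phiNmul_eq_zero hy hhom {S}).exists_run hconn
  obtain ⟨γ, hder, hγ⟩ := hrun.exists_derivesBy (β := [Sum.inl S]) rfl
  obtain ⟨w₁, w₂, rfl⟩ := exists_eq_of_nonterminals_eq_singleton hγ
  exact ⟨σ, fun p => by rw [← Multiset.coe_count, hσ, hy], w₁, w₂, hder⟩

open EEK in
/-- If all nonterminals are useful and `x ≥ 1` solves `Φ_N·x = 0`, then some production
sequence `σ` with `Ψ_P(σ) = x` derives from `S` a sentential form `w₁.S.w₂` with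
`w₁, w₂` terminal words (so the single nonterminal occurrence is `S` itself). -/
theorem homogeneous_eek_realizable
    {N T P : Type} [Fintype N] [Fintype T] [Fintype P]
    [DecidableEq N] [DecidableEq T] [DecidableEq P]
    (lhs : P → N) (rhs : P → List (N ⊕ T)) (S : N)
    (hU : ∀ A : N, Useful lhs rhs S A)
    (x : P → ℕ) (hx1 : ∀ p : P, 1 ≤ x p)
    (hhom : ∀ A : N, phiNmul lhs rhs x A = 0) :
    ∃ σ : List P, (∀ p : P, σ.count p = x p) ∧
      ∃ w₁ w₂ : List T,
        DerivesBy lhs rhs σ [Sum.inl S]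
          (w₁.map Sum.inr ++ Sum.inl S :: w₂.map Sum.inr) :=
  homogeneous_eek_realizable_general lhs rhs S hU x hx1 hhom
end

section
/- For all β₁, β₂ ∈ ℕ, every finite linearly ordered set P, every strictly increasing function c : ℕ → ℕ, and every m ∈ ℕ, there exists L ∈ ℕ such that every (c, m)-controlled bad nested sequence over ℕ^{β₁} × P × ℕ^{β₂} starting at height h₀ = 0 has length at most L. In particular, the maximal length of (c, m)-controlled bad partially nested sequences over ℕ^{β₁} × P × ℕ^{β₂} starting at height 0 is a well-defined natural number. -/
/-!
# Statement 7: controlled bad nested sequences have bounded length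

Over `Y = ℕ^{β₁} × P × ℕ^{β₂}` (ordered lexicographically, `P` a finite linear order),
every `(c, m)`-controlled bad nested sequence starting at height `0` has length at most
some `L` depending only on `β₁, β₂, P, c, m`.  A sequence of length `n` is modeled as the
first `n` values of a function `f : ℕ → Y × ℕ`.
-/

namespace PNS

/-- Strict lexicographic order on `Fin n → ℕ`. -/
def VecLt {n : ℕ} (u v : Fin n → ℕ) : Prop :=
  ∃ i : Fin n, (∀ j : Fin n, j < i → u j = v j) ∧ u i < v i

/-- The ranking domain `ℕ^{β₁} × P × ℕ^{β₂}`. -/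
abbrev Y (β₁ β₂ : ℕ) (P : Type) : Type := (Fin β₁ → ℕ) × P × (Fin β₂ → ℕ)

variable {β₁ β₂ : ℕ} {P : Type}

/-- Strict lexicographic order on `Y`. -/
def YLt [LT P] (y y' : Y β₁ β₂ P) : Prop :=
  VecLt y.1 y'.1 ∨
    y.1 = y'.1 ∧ (y.2.1 < y'.2.1 ∨ y.2.1 = y'.2.1 ∧ VecLt y.2.2 y'.2.2)

/-- Lexicographic order on `Y`. -/
def YLe [LT P] (y y' : Y β₁ β₂ P) : Prop := y = y' ∨ YLt y y'

/-- Consecutive heights of a nested sequence change by at most one. -/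
def HStep (h h' : ℕ) : Prop := h' = h + 1 ∨ h' = h ∨ h = h' + 1

/-- The first `n` elements of `f` form a *good* nested sequence: there are `k < m < n`
with `y_k ≤_lex y_m` and `h_i ≥ h_k` for all `k < i ≤ m`. -/
def GoodUpTo [LT P] (f : ℕ → Y β₁ β₂ P × ℕ) (n : ℕ) : Prop :=
  ∃ k m : ℕ, k < m ∧ m < n ∧ YLe (f k).1 (f m).1 ∧
    ∀ i : ℕ, k < i → i ≤ m → (f k).2 ≤ (f i).2

/-- `‖y‖`: the maximum of the `ℕ`-entries of `y`. -/
def ynorm (y : Y β₁ β₂ P) : ℕ := Finset.univ.sup y.1 ⊔ Finset.univ.sup y.2.2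

end PNS

/-!
Along the indices where the height attains its minimum over the rest of the sequence, an
infinite bad sequence would be strictly descending in the well-order `ℕ^{β₁} ×ₗ P ×ₗ ℕ^{β₂}`;
so every infinite nested sequence is good. Heights start at `0` and move by at most one, so
`h_k ≤ k`, and with the control there are only finitely many choices at each position.
Kőnig's lemma (here: a pointwise ultrafilter limit) turns arbitrarily long bad sequences
into an infinite one.
-/

open Filter

theorem exists_gt_isMinOn_Ici {β : Type*} [LinearOrder β] [WellFoundedLT β] (h : ℕ → β)
    (k : ℕ) : ∃ i, k < i ∧ IsMinOn h (Set.Ici i) i := by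
  obtain ⟨i, hi, hmin⟩ :=
    (InvImage.wf h wellFounded_lt).has_min (Set.Ioi k) ⟨k + 1, k.lt_succ_self⟩
  exact ⟨i, hi, isMinOn_iff.2 fun j hj => not_lt.1 (hmin j (Set.mem_Ioi.2 (hi.trans_le hj)))⟩

theorem exists_lt_le_and_forall_Ioc_le {α β : Type*} [LinearOrder α] [WellFoundedLT α]
    [LinearOrder β] [WellFoundedLT β] (y : ℕ → α) (h : ℕ → β) :
    ∃ k m, k < m ∧ y k ≤ y m ∧ ∀ i, k < i → i ≤ m → h k ≤ h i := by
  set minimal : ℕ → Prop := fun i => IsMinOn h (Set.Ici i) i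
  have hinf : (Set.ofPred minimal).Infinite := Set.infinite_of_forall_exists_gt fun k =>
    (exists_gt_isMinOn_Ici h k).imp fun i hi => ⟨hi.2, hi.1⟩
  set φ := Nat.nth minimal
  obtain ⟨n, hn⟩ := WellFounded.not_rel_apply_succ (r := (· < ·)) (y ∘ φ)
  exact ⟨φ n, φ (n + 1), Nat.nth_strictMono hinf n.lt_succ_self, not_lt.1 hn,
    fun i hi _ => isMinOn_iff.1 (Nat.nth_mem_of_infinite hinf n) i hi.le⟩

theorem exists_frequently_forall_lt_eq_of_finite {X : Type*} {A : ℕ → Set X}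
    (hA : ∀ k, (A k).Finite) {f : ℕ → ℕ → X} (hf : ∀ k, ∀ᶠ L in atTop, f L k ∈ A k) :
    ∃ g : ℕ → X, ∀ N, ∃ᶠ L in atTop, ∀ k < N, f L k = g k := by
  set U := Ultrafilter.of (atTop : Filter ℕ)
  have hU : ∀ k, ∃ x, ∀ᶠ L in (U : Filter ℕ), f L k = x := fun k => by
    obtain ⟨x, -, hx⟩ := Ultrafilter.eq_pure_of_finite_mem (f := U.map (f · k)) (hA k)
      (Ultrafilter.of_le atTop (hf k))
    exact ⟨x, show {x} ∈ U.map (f · k) by rw [hx]; exact rfl⟩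
  choose g hg using hU
  refine ⟨g, fun N => ?_⟩
  exact ((Set.finite_Iio N).eventually_all.2 fun k _ => hg k).frequently.filter_mono
    (Ultrafilter.of_le atTop)

namespace PNS

variable {β₁ β₂ : ℕ} {P : Type}

def toLexY (y : Y β₁ β₂ P) : Lex (Lex (Fin β₁ → ℕ) × Lex (P × Lex (Fin β₂ → ℕ))) :=
  toLex (toLex y.1, toLex (y.2.1, toLex y.2.2))

theorem toLexY_injective : Function.Injective (toLexY (β₁ := β₁) (β₂ := β₂) (P := P)) := by
  rintro ⟨u, q, v⟩ ⟨u', q', v'⟩ h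
  simpa [toLexY] using h

theorem yLt_iff_toLexY_lt [LinearOrder P] {y y' : Y β₁ β₂ P} :
    YLt y y' ↔ toLexY y < toLexY y' := by
  simp only [YLt, VecLt, toLexY, Prod.Lex.toLex_lt_toLex, toLex_inj]
  rfl

theorem yLe_iff_toLexY_le [LinearOrder P] {y y' : Y β₁ β₂ P} :
    YLe y y' ↔ toLexY y ≤ toLexY y' := by
  rw [YLe, yLt_iff_toLexY_lt, le_iff_eq_or_lt, toLexY_injective.eq_iff]

theorem GoodUpTo.mono [LT P] {f : ℕ → Y β₁ β₂ P × ℕ} {N N' : ℕ} (hf : GoodUpTo f N)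
    (h : N ≤ N') : GoodUpTo f N' :=
  let ⟨k, m, hkm, hmN, hle, hh⟩ := hf
  ⟨k, m, hkm, hmN.trans_le h, hle, hh⟩

theorem GoodUpTo.congr [LT P] {f f' : ℕ → Y β₁ β₂ P × ℕ} {N : ℕ} (hf : GoodUpTo f N)
    (h : ∀ k < N, f k = f' k) : GoodUpTo f' N := by
  obtain ⟨k, m, hkm, hmN, hle, hh⟩ := hf
  refine ⟨k, m, hkm, hmN, ?_, fun i hki him => ?_⟩
  · rwa [← h k (hkm.trans hmN), ← h m hmN]
  · rw [← h k (hkm.trans hmN), ← h i (him.trans_lt hmN)]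
    exact hh i hki him

theorem exists_goodUpTo [Finite P] [LinearOrder P] (g : ℕ → Y β₁ β₂ P × ℕ) :
    ∃ N, GoodUpTo g N := by
  obtain ⟨k, m, hkm, hle, hh⟩ :=
    exists_lt_le_and_forall_Ioc_le (fun i => toLexY (g i).1) (fun i => (g i).2)
  exact ⟨m + 1, k, m, hkm, m.lt_succ_self, yLe_iff_toLexY_le.2 hle, hh⟩

theorem finite_setOf_ynorm_le [Finite P] (B : ℕ) : {y : Y β₁ β₂ P | ynorm y ≤ B}.Finite := by
  refine (Set.Finite.pi' fun _ => Set.finite_Iic B).prod (Set.finite_univ.prod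
    (Set.Finite.pi' fun _ => Set.finite_Iic B)) |>.subset fun y hy => ?_
  simp only [Set.mem_ofPred_eq, ynorm, sup_le_iff, Finset.sup_le_iff, Finset.mem_univ,
    true_implies] at hy
  exact ⟨hy.1, trivial, hy.2⟩

theorem apply_le_of_hStep {n : ℕ} {h : ℕ → ℕ} (h0 : 0 < n → h 0 = 0)
    (hstep : ∀ k, k + 1 < n → HStep (h k) (h (k + 1))) : ∀ k < n, h k ≤ k
  | 0, hn => (h0 hn).le
  | k + 1, hn => by
    have := apply_le_of_hStep h0 hstep k (by omega)
    rcases hstep k hn with h | h | h <;> omega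

end PNS

theorem controlled_bad_nested_sequences_bounded_general
    (β₁ β₂ : ℕ) (P : Type) [Fintype P] [LinearOrder P]
    (c : ℕ → ℕ) (m : ℕ) :
    ∃ L : ℕ, ∀ (n : ℕ) (f : ℕ → PNS.Y β₁ β₂ P × ℕ),
      (0 < n → (f 0).2 = 0) →
      (∀ k : ℕ, k + 1 < n → PNS.HStep (f k).2 (f (k + 1)).2) →
      (∀ k < n, PNS.ynorm (f k).1 ≤ c^[k] m) →
      ¬ PNS.GoodUpTo f n →
      n ≤ L := by
  by_contra! hlong
  choose n f h0 hstep hctrl hbad hn using hlong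
  have hfin : ∀ k, ∀ᶠ L in atTop, f L k ∈ {p | PNS.ynorm p.1 ≤ c^[k] m ∧ p.2 ≤ k} :=
    fun k => eventually_ge_atTop k |>.mono fun L hL =>
      ⟨hctrl L k (by grind), PNS.apply_le_of_hStep (h0 L) (hstep L) k (by grind)⟩
  obtain ⟨g, hg⟩ := exists_frequently_forall_lt_eq_of_finite
    (fun k => (PNS.finite_setOf_ynorm_le _).prod (Set.finite_Iic k)) hfin
  obtain ⟨N, hgood⟩ := PNS.exists_goodUpTo g
  obtain ⟨L, hagree, hNL⟩ := ((hg N).and_eventually (eventually_ge_atTop N)).exists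
  exact hbad L ((hgood.congr fun k hk => (hagree k hk).symm).mono (by grind))

/-- **Length bound for controlled bad nested sequences.**  For all `β₁, β₂`, every finite
linearly ordered `P`, every strictly increasing control `c` and every `m`, there is an
`L` bounding the length of every `(c, m)`-controlled bad nested sequence over
`ℕ^{β₁} × P × ℕ^{β₂}` that starts at height `0`.  In particular the maximal length of
`(c, m)`-controlled bad partially nested sequences starting at height `0` is a
well-defined natural number. -/
theorem controlled_bad_nested_sequences_bounded
    (β₁ β₂ : ℕ) (P : Type) [Fintype P] [LinearOrder P]
    (c : ℕ → ℕ) (hc : StrictMono c) (m : ℕ) :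
    ∃ L : ℕ, ∀ (n : ℕ) (f : ℕ → PNS.Y β₁ β₂ P × ℕ),
      (0 < n → (f 0).2 = 0) →
      (∀ k : ℕ, k + 1 < n → PNS.HStep (f k).2 (f (k + 1)).2) →
      (∀ k < n, PNS.ynorm (f k).1 ≤ c^[k] m) →
      ¬ PNS.GoodUpTo f n →
      n ≤ L :=
  controlled_bad_nested_sequences_bounded_general β₁ β₂ P c m
end

section
/- Let (y₀, h₀), (y₁, h₁), … be a bad nested sequence over ℕ^{β₁} × P × ℕ^{β₂} and let k₀ < k₁ < ⋯ enumerate the indices k with h_k = 0. Then the subsequence y_{k₀}, y_{k₁}, … is strictly decreasing in the lexicographic order on ℕ^{β₁} × P × ℕ^{β₂}; in particular, it is itself a bad sequence in the ordinary (non-nested) sense, i.e., there are no indices i < j with y_{k_i} ≤_lex y_{k_j}. -/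
lemma vec_trichot {n : ℕ} (u v : Fin n → ℕ) :
    u = v ∨ PNS.VecLt u v ∨ PNS.VecLt v u := by
  by_cases h : u = v
  · exact Or.inl h
  right
  have hne : ∃ i, u i ≠ v i := by
    by_contra hc
    push_neg at hc
    exact h (funext hc)
  set s : Finset (Fin n) := Finset.univ.filter (fun i => u i ≠ v i) with hs
  have hsne : s.Nonempty := by
    obtain ⟨i, hi⟩ := hne
    exact ⟨i, by simp [hs, hi]⟩
  set i := s.min' hsne with hi
  have hims : i ∈ s := s.min'_mem hsne
  have hieq : ∀ j, j < i → u j = v j := by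
    intro j hj
    by_contra hc
    have : j ∈ s := by simp [hs, hc]
    exact absurd (s.min'_le j this) (not_le.mpr hj)
  have hine : u i ≠ v i := by simpa [hs] using hims
  rcases lt_trichotomy (u i) (v i) with h1 | h1 | h1
  · exact Or.inl ⟨i, hieq, h1⟩
  · exact absurd h1 hine
  · exact Or.inr ⟨i, fun j hj => (hieq j hj).symm, h1⟩

lemma ylt_trichot {β₁ β₂ : ℕ} {P : Type} [LinearOrder P] (y y' : PNS.Y β₁ β₂ P) :
    y = y' ∨ PNS.YLt y y' ∨ PNS.YLt y' y := by
  rcases vec_trichot y.1 y'.1 with h1 | h1 | h1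
  · rcases lt_trichotomy y.2.1 y'.2.1 with h2 | h2 | h2
    · exact Or.inr (Or.inl (Or.inr ⟨h1, Or.inl h2⟩))
    · rcases vec_trichot y.2.2 y'.2.2 with h3 | h3 | h3
      · left
        exact Prod.ext h1 (Prod.ext h2 h3)
      · exact Or.inr (Or.inl (Or.inr ⟨h1, Or.inr ⟨h2, h3⟩⟩))
      · exact Or.inr (Or.inr (Or.inr ⟨h1.symm, Or.inr ⟨h2.symm, h3⟩⟩))
    · exact Or.inr (Or.inr (Or.inr ⟨h1.symm, Or.inl h2⟩))
  · exact Or.inr (Or.inl (Or.inl h1))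
  · exact Or.inr (Or.inr (Or.inl h1))

/-- **The height-zero subsequence of a bad nested sequence is strictly lexicographically
decreasing.**  If `f` restricted to its first `n` values is a bad nested sequence and
`idx` (strictly monotone on `[0, r)`) enumerates exactly the indices of height `0`,
then for `i < j` we have `y_{idx j} <_lex y_{idx i}`; in particular
`¬ (y_{idx i} ≤_lex y_{idx j})`, so the subsequence is bad in the ordinary,
non-nested sense. -/
theorem bad_nested_zero_height_subsequence
    (β₁ β₂ : ℕ) (P : Type) [Fintype P] [LinearOrder P]
    (n : ℕ) (f : ℕ → PNS.Y β₁ β₂ P × ℕ)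
    (hstep : ∀ k : ℕ, k + 1 < n → PNS.HStep (f k).2 (f (k + 1)).2)
    (hbad : ¬ PNS.GoodUpTo f n)
    (r : ℕ) (idx : ℕ → ℕ)
    (hmono : ∀ i j : ℕ, i < j → j < r → idx i < idx j)
    (hdom : ∀ i < r, idx i < n)
    (hzero : ∀ i < r, (f (idx i)).2 = 0)
    (hall : ∀ k < n, (f k).2 = 0 → ∃ i < r, idx i = k) :
    ∀ i j : ℕ, i < j → j < r →
      PNS.YLt (f (idx j)).1 (f (idx i)).1 ∧
        ¬ PNS.YLe (f (idx i)).1 (f (idx j)).1 := by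
  intro i j hij hjr
  have hir : i < r := hij.trans hjr
  have hidx : idx i < idx j := hmono i j hij hjr
  have hnle : ¬ PNS.YLe (f (idx i)).1 (f (idx j)).1 := by
    intro hle
    apply hbad
    refine ⟨idx i, idx j, hidx, hdom j hjr, hle, ?_⟩
    intro k _ _
    simp [hzero i hir]
  refine ⟨?_, hnle⟩
  rcases ylt_trichot (f (idx i)).1 (f (idx j)).1 with h | h | h
  · exact absurd (Or.inl h) hnle
  · exact absurd (Or.inr h) hnle
  · exact h
end
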